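/- arXiv:2503.05579 — 5 statements merged into one kernel-verified Lean document; each statement's English description precedes it below -/
import Mathlib

section
/- Let F be a collection and F1, F2 be stacks on a nonempty set S. Then F ⊓ F1 ⊆ F2 if and only if F1 ⊆ (F ⊓ F2*)*, where F ⊓ G := {A ∩ B : A ∈ F, B ∈ G}. -/
variable {S : Type*}

/-- The mesh of a collection `F` on `S`. -/
def mesh (F : Set (Set S)) : Set (Set S) :=
  {A | ∀ B ∈ F, (A ∩ B).Nonempty}

/-- A stack is an upward closed collection. -/
def IsStack (F : Set (Set S)) : Prop :=
  ∀ A ∈ F, ∀ B : Set S, A ⊆ B → B ∈ F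

/-- A filter: a nonempty stack closed under finite intersections. -/
def IsFilterColl (F : Set (Set S)) : Prop :=
  IsStack F ∧ F.Nonempty ∧ ∀ A ∈ F, ∀ B ∈ F, A ∩ B ∈ F

/-- A grill: a stack not containing `∅` satisfying the Ramsey property. -/
def IsGrill (G : Set (Set S)) : Prop :=
  IsStack G ∧ ∅ ∉ G ∧ ∀ A B : Set S, A ∪ B ∈ G → A ∈ G ∨ B ∈ G

/-- `F ⊓ G := {A ∩ B : A ∈ F, B ∈ G}`. -/
def smash (F G : Set (Set S)) : Set (Set S) :=
  {C | ∃ A ∈ F, ∃ B ∈ G, C = A ∩ B}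

/-- A proper collection: nonempty and not containing `∅`. -/
def IsProperColl (F : Set (Set S)) : Prop :=
  F.Nonempty ∧ ∅ ∉ F
section Smash

variable {F G H : Set (Set S)}

theorem mem_mesh_smash {B : Set S} :
    B ∈ mesh (smash F G) ↔ ∀ A ∈ F, ∀ D ∈ G, (B ∩ (A ∩ D)).Nonempty := by
  constructor
  · intro hB A hA D hD
    exact hB _ ⟨A, hA, D, hD, rfl⟩
  · rintro hB _ ⟨A, hA, D, hD, rfl⟩
    exact hB A hA D hD

theorem smash_subset_iff : smash F G ⊆ H ↔ ∀ A ∈ F, ∀ B ∈ G, A ∩ B ∈ H := by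
  constructor
  · intro h A hA B hB
    exact h ⟨A, hA, B, hB, rfl⟩
  · rintro h _ ⟨A, hA, B, hB, rfl⟩
    exact h A hA B hB

end Smash

theorem compl_mem_mesh_of_notMem {G : Set (Set S)} (hG : IsStack G) {A : Set S} (hA : A ∉ G) :
    Aᶜ ∈ mesh G := by
  intro B hB
  by_contra hdisj
  refine hA (hG B hB A fun x hx => ?_)
  by_contra hxA
  exact hdisj ⟨x, hxA, hx⟩

theorem smash_galois_general (F F1 F2 : Set (Set S))
    (hF2 : IsStack F2) :
    smash F F1 ⊆ F2 ↔ F1 ⊆ mesh (smash F (mesh F2)) := by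
  rw [smash_subset_iff]
  constructor
  · intro h B hB
    refine mem_mesh_smash.2 fun A hA D hD => ?_
    obtain ⟨x, hxD, hxA, hxB⟩ := hD _ (h A hA B hB)
    exact ⟨x, hxB, hxA, hxD⟩
  · intro h A hA B hB
    by_contra hAB
    -- Test `B` against `A ∩ (A ∩ B)ᶜ`, which it cannot meet.
    obtain ⟨x, hxB, hxA, hxAB⟩ :=
      mem_mesh_smash.1 (h hB) A hA _ (compl_mem_mesh_of_notMem hF2 hAB)
    exact hxAB ⟨hxA, hxB⟩

theorem smash_galois [Nonempty S] (F F1 F2 : Set (Set S))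
    (hF1 : IsStack F1) (hF2 : IsStack F2) :
    smash F F1 ⊆ F2 ↔ F1 ⊆ mesh (smash F (mesh F2)) :=
  smash_galois_general F F1 F2 hF2
end

section
/- If F is a stack on a nonempty set S, then F ⊓ F* is a grill on S, which is proper if and only if F is proper. -/
variable {S : Type*}

/- Idea: for a stack `F`, a set `C` lies in `F ⊓ F*` exactly when `C ∪ D ∈ F` for some `D ∉ F`
(write `C = A ∩ B` and take `D = A \ B`; conversely `C = (C ∪ D) ∩ (C ∪ Dᶜ)`). In this form
upward closure is clear, `∅` is excluded, and `(X ∪ Y) ∪ D ∈ F` gives `X` with `Y ∪ D` if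
`Y ∪ D ∉ F`, and `Y` with `D` otherwise. -/

theorem isStack_mesh (F : Set (Set S)) : IsStack (mesh F) :=
  fun _ hA _ hAB C hC => (hA C hC).mono (Set.inter_subset_inter_left C hAB)

section

variable {F : Set (Set S)}

theorem compl_mem_mesh_iff (hF : IsStack F) {D : Set S} : Dᶜ ∈ mesh F ↔ D ∉ F := by
  constructor
  · intro hD hDF
    simpa using hD D hDF
  · intro hD E hE
    rw [Set.inter_comm, Set.inter_compl_nonempty_iff]
    exact fun hED => hD (hF E hE D hED)

theorem mem_smash_mesh_iff (hF : IsStack F) {C : Set S} :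
    C ∈ smash F (mesh F) ↔ ∃ D ∉ F, C ∪ D ∈ F := by
  constructor
  · rintro ⟨A, hA, B, hB, rfl⟩
    refine ⟨A \ B, ?_, by rwa [Set.inter_union_sdiff]⟩
    exact (compl_mem_mesh_iff hF).1 (isStack_mesh F B hB _ fun _ hB hAB => hAB.2 hB)
  · rintro ⟨D, hD, hCD⟩
    refine ⟨C ∪ D, hCD, C ∪ Dᶜ, ?_, ?_⟩
    · exact isStack_mesh F _ ((compl_mem_mesh_iff hF).2 hD) _ Set.subset_union_right
    · rw [← Set.union_inter_distrib_left, Set.inter_compl_self, Set.union_empty]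

theorem isGrill_smash_mesh (hF : IsStack F) : IsGrill (smash F (mesh F)) := by
  simp only [IsGrill, IsStack, mem_smash_mesh_iff hF]
  refine ⟨?_, ?_, ?_⟩
  · rintro C ⟨D, hD, hCD⟩ C' hCC'
    exact ⟨D, hD, hF _ hCD _ (Set.union_subset_union_left D hCC')⟩
  · rintro ⟨D, hD, hED⟩
    exact hD (by rwa [Set.empty_union] at hED)
  · rintro X Y ⟨D, hD, hXYD⟩
    by_cases hYD : Y ∪ D ∈ F
    · exact Or.inr ⟨D, hD, hYD⟩
    · exact Or.inl ⟨Y ∪ D, hYD, by rwa [← Set.union_assoc]⟩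

theorem isProperColl_smash_mesh_iff (hF : IsStack F) :
    IsProperColl (smash F (mesh F)) ↔ IsProperColl F := by
  constructor
  · rintro ⟨⟨C, hC⟩, -⟩
    obtain ⟨D, hD, hCD⟩ := (mem_smash_mesh_iff hF).1 hC
    exact ⟨⟨_, hCD⟩, fun hE => hD (hF ∅ hE D (Set.empty_subset D))⟩
  · rintro ⟨⟨A, hA⟩, hE⟩
    refine ⟨⟨A, (mem_smash_mesh_iff hF).2 ⟨∅, hE, by rwa [Set.union_empty]⟩⟩, ?_⟩
    exact (isGrill_smash_mesh hF).2.1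

end

theorem smash_mesh_isGrill_general (F : Set (Set S)) (hF : IsStack F) :
    IsGrill (smash F (mesh F)) ∧ (IsProperColl (smash F (mesh F)) ↔ IsProperColl F) :=
  ⟨isGrill_smash_mesh hF, isProperColl_smash_mesh_iff hF⟩

theorem smash_mesh_isGrill [Nonempty S] (F : Set (Set S)) (hF : IsStack F) :
    IsGrill (smash F (mesh F)) ∧ (IsProperColl (smash F (mesh F)) ↔ IsProperColl F) :=
  smash_mesh_isGrill_general F hF
end

section
/- Let S be a semigroup and F, G stacks on S. Then the mesh of the product of F and G equals the product of the meshes: (F · G)* = F* · G*. -/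
variable {S : Type*}

variable [Semigroup S]

/-- The derived set of `A` along a collection `F`: `{h : h⁻¹A ∈ F}`. -/
def derivSet (A : Set S) (F : Set (Set S)) : Set S :=
  {h | {x | h * x ∈ A} ∈ F}

/-- The product of collections: `F · G := {A : A'(G) ∈ F}`. -/
def cprod (F G : Set (Set S)) : Set (Set S) :=
  {A | derivSet A G ∈ F}

/-! For a stack `F`, a set meets every member of `F` exactly when its complement is not in `F`,
so `F*` is `F` complemented and negated. Since `h⁻¹(Aᶜ) = (h⁻¹A)ᶜ`, this duality carries the
derived set `(Aᶜ)'(G)` to the complement of `A'(G*)`, and applying it once more on the outside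
(`F · G` is again a stack) gives `(F · G)* = F* · G*`. -/

theorem mem_mesh_iff_compl_notMem {α : Type*} {F : Set (Set α)} (hF : IsStack F) {A : Set α} :
    A ∈ mesh F ↔ Aᶜ ∉ F := by
  refine ⟨fun hA hAc => by simpa using hA Aᶜ hAc, fun hA B hB => ?_⟩
  by_contra hAB
  exact hA (hF B hB Aᶜ fun x hxB hxA => hAB ⟨x, hxA, hxB⟩)

section Semigroup

variable {F G : Set (Set S)}

theorem derivSet_mono (hG : IsStack G) {A B : Set S} (hAB : A ⊆ B) :
    derivSet A G ⊆ derivSet B G :=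
  fun _ hh => hG _ hh _ fun _ hx => hAB hx

theorem IsStack.cprod (hF : IsStack F) (hG : IsStack G) : IsStack (cprod F G) :=
  fun _ hA _ hAB => hF _ hA _ (derivSet_mono hG hAB)

theorem derivSet_compl (hG : IsStack G) (A : Set S) :
    derivSet Aᶜ G = (derivSet A (mesh G))ᶜ := by
  ext h
  change {x | h * x ∈ A}ᶜ ∈ G ↔ {x | h * x ∈ A} ∉ mesh G
  rw [mem_mesh_iff_compl_notMem hG, not_not]

end Semigroup

theorem mesh_cprod (F G : Set (Set S)) (hF : IsStack F) (hG : IsStack G) :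
    mesh (cprod F G) = cprod (mesh F) (mesh G) := by
  ext A
  calc A ∈ mesh (cprod F G) ↔ derivSet Aᶜ G ∉ F := mem_mesh_iff_compl_notMem (hF.cprod hG)
    _ ↔ (derivSet A (mesh G))ᶜ ∉ F := by rw [derivSet_compl hG]
    _ ↔ A ∈ cprod (mesh F) (mesh G) := (mem_mesh_iff_compl_notMem hF).symm
end

section
/- Let S be a semigroup and let F1, F2, G1, G2 be stacks on S. Then (F1 · G1) ⊓ (F2 · G2) ⊆ (F1 ⊓ F2) · (G1 ⊓ G2). -/
variable {S : Type*}

variable [Semigroup S]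

omit [Semigroup S] in
theorem inter_mem_smash {F G : Set (Set S)} {A B : Set S} (hA : A ∈ F) (hB : B ∈ G) :
    A ∩ B ∈ smash F G :=
  ⟨A, hA, B, hB, rfl⟩

omit [Semigroup S] in
theorem IsStack.smash {F G : Set (Set S)} (hF : IsStack F) (hG : IsStack G) :
    IsStack (smash F G) := by
  rintro C ⟨A, hA, B, hB, rfl⟩ D hD
  refine ⟨A ∪ D, hF A hA _ Set.subset_union_left, B ∪ D, hG B hB _ Set.subset_union_left, ?_⟩
  rw [← Set.inter_union_distrib_right, Set.union_eq_right.2 hD]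

theorem inter_derivSet_subset_derivSet_smash (A B : Set S) (G1 G2 : Set (Set S)) :
    derivSet A G1 ∩ derivSet B G2 ⊆ derivSet (A ∩ B) (smash G1 G2) :=
  fun _ ⟨hA, hB⟩ => inter_mem_smash hA hB

theorem smash_cprod_subset_general (F1 F2 G1 G2 : Set (Set S))
    (hF1 : IsStack F1) (hF2 : IsStack F2) :
    smash (cprod F1 G1) (cprod F2 G2) ⊆ cprod (smash F1 F2) (smash G1 G2) := by
  rintro C ⟨A, hA, B, hB, rfl⟩
  exact hF1.smash hF2 _ (inter_mem_smash hA hB) _ (inter_derivSet_subset_derivSet_smash A B G1 G2)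

theorem smash_cprod_subset (F1 F2 G1 G2 : Set (Set S))
    (hF1 : IsStack F1) (hF2 : IsStack F2) (hG1 : IsStack G1) (hG2 : IsStack G2) :
    smash (cprod F1 G1) (cprod F2 G2) ⊆ cprod (smash F1 F2) (smash G1 G2) :=
  smash_cprod_subset_general F1 F2 G1 G2 hF1 hF2
end

section
/- A subset A of a semigroup S is piecewise syndetic if and only if there exists an idempotent ultrafilter e on S such that the derived set A'(e) = {h ∈ S : h⁻¹A ∈ e} is syndetic. -/
variable {S : Type*}

variable [Semigroup S]

/-- An ultrafilter: both a filter and a grill. -/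
def IsUltra (q : Set (Set S)) : Prop :=
  IsFilterColl q ∧ IsGrill q

/-- A syndetic subset of a semigroup. -/
def Syndetic (A : Set S) : Prop :=
  ∃ H : Finset S, H.Nonempty ∧ (⋃ h ∈ H, {x | h * x ∈ A}) = Set.univ

/-- A thick subset of a semigroup. -/
def ThickSet (A : Set S) : Prop :=
  ∀ H : Finset S, H.Nonempty → (⋂ h ∈ H, {x | h * x ∈ A}).Nonempty

/-- A piecewise syndetic subset of a semigroup. -/
def PiecewiseSyndetic (A : Set S) : Prop :=
  ∃ B C : Set S, Syndetic B ∧ ThickSet C ∧ A = B ∩ C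

/-!
Write `H⁻¹A = ⋃ h ∈ H, h⁻¹A` for finite `H`. A set is piecewise syndetic iff some `H⁻¹A` is
thick, and `A'(e)` is syndetic iff some `H⁻¹A` has all its translates `s⁻¹(H⁻¹A)` in `e`, because
an ultrafilter contains a finite union iff it contains one of its members. A set all of whose
translates lie in an ultrafilter is thick by the finite intersection property; conversely the
translates of a thick set generate an ultrafilter `p`, they then lie in every `q * p`, and the
closed left ideal `βS * p` contains an idempotent by the Ellis–Numakura lemma.
-/

attribute [local instance] Ultrafilter.semigroup

open Filter
open scoped Pointwise

def preimageUnion (H : Finset S) (A : Set S) : Set S :=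
  ⋃ h ∈ H, {x | h * x ∈ A}

lemma mem_preimageUnion {H : Finset S} {A : Set S} {x : S} :
    x ∈ preimageUnion H A ↔ ∃ h ∈ H, h * x ∈ A := by
  simp [preimageUnion]

lemma syndetic_iff_preimageUnion_eq_univ {B : Set S} :
    Syndetic B ↔ ∃ H : Finset S, H.Nonempty ∧ preimageUnion H B = Set.univ :=
  Iff.rfl

lemma syndetic_union_compl_preimageUnion {H : Finset S} (hH : H.Nonempty) (A : Set S) :
    Syndetic (A ∪ (preimageUnion H A)ᶜ) := by
  classical
  refine ⟨H ∪ H * H, hH.mono Finset.subset_union_left, Set.eq_univ_of_forall fun s => ?_⟩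
  simp only [Set.mem_iUnion, Set.mem_ofPred_eq, Set.mem_union, Set.mem_compl_iff]
  by_cases hs : ∀ h ∈ H, h * s ∈ preimageUnion H A
  · obtain ⟨h₀, hh₀⟩ := hH
    obtain ⟨h, hh, hA⟩ := mem_preimageUnion.1 (hs h₀ hh₀)
    exact ⟨h * h₀, Finset.mem_union_right _ (Finset.mul_mem_mul hh hh₀),
      Or.inl (by rwa [mul_assoc])⟩
  · push Not at hs
    obtain ⟨h, hh, hnot⟩ := hs
    exact ⟨h, Finset.mem_union_left _ hh, Or.inr hnot⟩

lemma ThickSet.mono {C D : Set S} (hC : ThickSet C) (hCD : C ⊆ D) : ThickSet D := fun F hF =>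
  (hC F hF).mono <| Set.biInter_mono subset_rfl fun _ _ _ hx => hCD hx

lemma PiecewiseSyndetic.thickSet_preimageUnion {A : Set S} (hA : PiecewiseSyndetic A) :
    ∃ H : Finset S, H.Nonempty ∧ ThickSet (preimageUnion H A) := by
  classical
  obtain ⟨B, C, ⟨H, hH, hcov⟩, hC, rfl⟩ := hA
  refine ⟨H, hH, fun F hF => ?_⟩
  -- a point on which `C` is thick along `H * F` works, since `H` covers `S` by translates of `B`
  obtain ⟨x, hx⟩ := hC (H * F) (hH.mul hF)
  simp only [Set.mem_iInter, Set.mem_ofPred_eq] at hx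
  refine ⟨x, Set.mem_biInter fun f hf => mem_preimageUnion.2 ?_⟩
  obtain ⟨h, hh, hB⟩ := mem_preimageUnion.1 (hcov ▸ Set.mem_univ (f * x))
  refine ⟨h, hh, hB, ?_⟩
  simpa only [mul_assoc] using hx (h * f) (Finset.mul_mem_mul hh hf)

lemma piecewiseSyndetic_of_thickSet_preimageUnion {A : Set S} {H : Finset S} (hH : H.Nonempty)
    (hT : ThickSet (preimageUnion H A)) : PiecewiseSyndetic A := by
  refine ⟨A ∪ (preimageUnion H A)ᶜ, A ∪ preimageUnion H A,
    syndetic_union_compl_preimageUnion hH A, hT.mono Set.subset_union_right, ?_⟩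
  rw [← Set.union_inter_distrib_left, Set.compl_inter_self, Set.union_empty]

lemma piecewiseSyndetic_iff_thickSet_preimageUnion {A : Set S} :
    PiecewiseSyndetic A ↔ ∃ H : Finset S, H.Nonempty ∧ ThickSet (preimageUnion H A) :=
  ⟨PiecewiseSyndetic.thickSet_preimageUnion,
    fun ⟨_, hH, hT⟩ => piecewiseSyndetic_of_thickSet_preimageUnion hH hT⟩

namespace Ultrafilter

lemma mem_mul_iff_derivSet_mem (U V : Ultrafilter S) (A : Set S) :
    A ∈ U * V ↔ derivSet A {B | B ∈ V} ∈ U :=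
  Ultrafilter.eventually_mul U V (· ∈ A)

omit [Semigroup S] in
lemma isUltra_setOf_mem (U : Ultrafilter S) : IsUltra {A | A ∈ U} :=
  ⟨⟨fun _ hA _ => mem_of_superset hA, ⟨_, univ_mem⟩, fun _ hA _ hB => inter_mem hA hB⟩,
    fun _ hA _ => mem_of_superset hA, Ultrafilter.empty_notMem, fun _ _ => union_mem_iff.1⟩

lemma cprod_setOf_mem (U V : Ultrafilter S) :
    cprod {A | A ∈ U} {A | A ∈ V} = {A | A ∈ U * V} := by
  ext A
  exact (mem_mul_iff_derivSet_mem U V A).symm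

lemma translate_preimageUnion_mem_iff (U : Ultrafilter S) (H : Finset S) (A : Set S) (s : S) :
    {x | s * x ∈ preimageUnion H A} ∈ U ↔ s ∈ preimageUnion H (derivSet A {B | B ∈ U}) := by
  have hunion : {x | s * x ∈ preimageUnion H A} = ⋃ h ∈ (H : Set S), {x | h * s * x ∈ A} := by
    ext x
    simp only [mem_preimageUnion, Set.mem_ofPred_eq, Set.mem_iUnion, Finset.mem_coe, mul_assoc,
      exists_prop]
  rw [hunion, finite_biUnion_mem_iff H.finite_toSet, mem_preimageUnion]
  rfl

lemma syndetic_derivSet_iff (U : Ultrafilter S) (A : Set S) :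
    Syndetic (derivSet A {B | B ∈ U}) ↔
      ∃ H : Finset S, H.Nonempty ∧ ∀ s, {x | s * x ∈ preimageUnion H A} ∈ U := by
  simp only [syndetic_iff_preimageUnion_eq_univ, Set.eq_univ_iff_forall,
    translate_preimageUnion_mem_iff]

lemma thickSet_of_forall_translate_mem {U : Ultrafilter S} {T : Set S}
    (hT : ∀ s, {x | s * x ∈ T} ∈ U) : ThickSet T := fun F _ =>
  nonempty_of_mem <| (biInter_finset_mem F).2 fun s _ => hT s

lemma forall_translate_mem_mul {p : Ultrafilter S} {T : Set S}
    (hp : ∀ s, {x | s * x ∈ T} ∈ p) (q : Ultrafilter S) (s : S) :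
    {x | s * x ∈ T} ∈ q * p := by
  rw [mem_mul_iff_derivSet_mem]
  refine mem_of_superset univ_mem fun y _ => ?_
  simpa only [derivSet, Set.mem_ofPred_eq, mul_assoc] using hp (s * y)

lemma exists_idempotent_mul_right (p : Ultrafilter S) :
    ∃ q : Ultrafilter S, q * p * (q * p) = q * p := by
  obtain ⟨_, ⟨q, rfl⟩, hq⟩ :=
    exists_idempotent_in_compact_subsemigroup continuous_mul_left (Set.range (· * p))
      ⟨p * p, p, rfl⟩ (isCompact_range (continuous_mul_left p))
      (by rintro _ ⟨q, rfl⟩ _ ⟨q', rfl⟩; exact ⟨q * p * q', mul_assoc _ _ _⟩)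
  exact ⟨q, hq⟩

end Ultrafilter

omit [Semigroup S] in
lemma IsUltra.exists_eq_setOf_mem {e : Set (Set S)} (he : IsUltra e) :
    ∃ U : Ultrafilter S, e = {A | A ∈ U} := by
  obtain ⟨⟨hstack, ⟨D, hD⟩, hinter⟩, -, hempty, hunion⟩ := he
  have huniv : Set.univ ∈ e := hstack D hD _ (Set.subset_univ D)
  let F : Filter S :=
    { sets := e
      univ_sets := huniv
      sets_of_superset := fun h hsub => hstack _ h _ hsub
      inter_sets := fun hA hB => hinter _ hA _ hB }
  refine ⟨Ultrafilter.ofComplNotMemIff F fun s => ⟨fun hs => ?_, fun hs hsc => ?_⟩, rfl⟩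
  · exact (hunion s sᶜ (by rwa [Set.union_compl_self])).resolve_right hs
  · exact hempty (Set.inter_compl_self s ▸ hinter _ hs _ hsc)

lemma ThickSet.exists_ultrafilter_forall_translate_mem [Nonempty S] {T : Set S}
    (hT : ThickSet T) : ∃ p : Ultrafilter S, ∀ s, {x | s * x ∈ T} ∈ p := by
  classical
  obtain ⟨p, hp⟩ := Ultrafilter.exists_ultrafilter_of_finite_inter_nonempty
    (Set.range fun s => {x | s * x ∈ T}) fun F hF => by
      rw [← Set.image_univ, Finset.subset_set_image_iff] at hF
      obtain ⟨F', -, rfl⟩ := hF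
      rw [Finset.coe_image, Set.sInter_image]
      obtain rfl | hF' := F'.eq_empty_or_nonempty
      · simp
      · exact hT F' hF'
  exact ⟨p, fun s => hp ⟨s, rfl⟩⟩

lemma ThickSet.exists_idempotent_forall_translate_mem [Nonempty S] {T : Set S}
    (hT : ThickSet T) : ∃ e : Ultrafilter S, e * e = e ∧ ∀ s, {x | s * x ∈ T} ∈ e := by
  obtain ⟨p, hp⟩ := hT.exists_ultrafilter_forall_translate_mem
  obtain ⟨q, hq⟩ := p.exists_idempotent_mul_right
  exact ⟨q * p, hq, Ultrafilter.forall_translate_mem_mul hp q⟩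

theorem piecewiseSyndetic_iff_idempotent (A : Set S) :
    PiecewiseSyndetic A ↔
      ∃ e : Set (Set S), IsUltra e ∧ cprod e e = e ∧ Syndetic (derivSet A e) := by
  rw [piecewiseSyndetic_iff_thickSet_preimageUnion]
  constructor
  · rintro ⟨H, hH, hT⟩
    have : Nonempty S := ⟨hH.choose⟩
    obtain ⟨e, he, hmem⟩ := hT.exists_idempotent_forall_translate_mem
    exact ⟨{B | B ∈ e}, e.isUltra_setOf_mem, by rw [Ultrafilter.cprod_setOf_mem, he],
      (e.syndetic_derivSet_iff A).2 ⟨H, hH, hmem⟩⟩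
  · rintro ⟨e, he, -, hsyn⟩
    obtain ⟨U, rfl⟩ := he.exists_eq_setOf_mem
    obtain ⟨H, hH, hmem⟩ := (U.syndetic_derivSet_iff A).1 hsyn
    exact ⟨H, hH, Ultrafilter.thickSet_of_forall_translate_mem hmem⟩
end
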